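/- arXiv:1002.0539 — 12 statements merged into one kernel-verified Lean document; each statement's English description precedes it below -/
import Mathlib

section
/- Let D be a Gauss diagram on the Wilson line containing two distinct arrows i and j with σ(i) = −σ(j), such that the head of i and the head of j are adjacent endpoints of D and the tail of i and the tail of j are adjacent endpoints of D (the configuration of the second Reidemeister move). Then I_D(i) = −I_D(j), and if D' denotes the Gauss diagram obtained from D by deleting both arrows i and j, then I_{D'}(x) = I_D(x) for every arrow x of D with x ∉ {i, j}. -/
/-!
Write `Between a b p` as `(p - a) * (p - b) < 0`. If `p` and `q` are adjacent endpoints, then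
`0 < (p - a) * (q - a)` for every other endpoint `a`, so `p` and `q` lie on the same side of every
interval spanned by other endpoints, and every other endpoint lies inside the interval of `i` iff
it lies inside that of `j`. Hence any third arrow sees `i` and `j` alike, and `i`, `j` see any third
arrow alike; as `σ(i) = -σ(j)`, these contributions cancel. The remaining terms, that of `j` in `I(i)`
and that of `i` in `I(j)`, cancel because the head of exactly one of `i`, `j` lies inside the other
arrow.
-/

noncomputable section

namespace Gauss

attribute [local instance] Classical.propDecidable

/-- An arrow of a Gauss diagram on the Wilson line: a tail point, a head point,
and a sign. -/
structure Arrow where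
  t : ℝ
  h : ℝ
  sgn : ℤ

/-- `p` lies strictly between `a` and `b`. -/
def Between (a b p : ℝ) : Prop := (a < p ∧ p < b) ∨ (b < p ∧ p < a)

/-- Two arrows are linked if they are distinct and exactly one of the two
endpoints of `y` lies strictly between the two endpoints of `x`. -/
def Linked (x y : Arrow) : Prop :=
  x ≠ y ∧ Xor' (Between x.t x.h y.t) (Between x.t x.h y.h)

/-- `delta x y = 1` if the head of `y` lies strictly between the endpoints of `x`,
and `-1` otherwise. -/
def delta (x y : Arrow) : ℤ := if Between x.t x.h y.h then 1 else -1

/-- The index `I_D(x)` of an arrow `x` in the diagram `D`. -/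
def index (D : Finset Arrow) (x : Arrow) : ℤ :=
  ∑ y ∈ D.filter (fun y => Linked x y), delta x y * x.sgn * y.sgn

/-- `p` is an endpoint of the diagram `D`. -/
def IsEndpoint (D : Finset Arrow) (p : ℝ) : Prop :=
  ∃ a ∈ D, p = a.t ∨ p = a.h

/-- A finite set of arrows is a Gauss diagram on the Wilson line if every sign
is `±1` and all endpoints are pairwise distinct. -/
def IsGaussDiagram (D : Finset Arrow) : Prop :=
  (∀ a ∈ D, a.sgn = 1 ∨ a.sgn = -1) ∧
  (∀ a ∈ D, a.t ≠ a.h) ∧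
  (∀ a ∈ D, ∀ b ∈ D, a ≠ b → a.t ≠ b.t ∧ a.t ≠ b.h ∧ a.h ≠ b.t ∧ a.h ≠ b.h)

/-- Two endpoints of `D` are adjacent if no endpoint of `D` lies strictly
between them. -/
def Adjacent (D : Finset Arrow) (p q : ℝ) : Prop :=
  p ≠ q ∧ IsEndpoint D p ∧ IsEndpoint D q ∧ ∀ r, IsEndpoint D r → ¬ Between p q r

/-- The degree of an arrow in the intersection graph of `D`: the number of
arrows linked with it. -/
def degree (D : Finset Arrow) (x : Arrow) : ℕ :=
  (D.filter (fun y => Linked x y)).card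

/-- A pair of arrows is heads-in if the head of each lies strictly between the
endpoints of the other. -/
def HeadsIn (x y : Arrow) : Prop :=
  Between x.t x.h y.h ∧ Between y.t y.h x.h

/-- A pair of arrows is heads-out if the head of neither lies strictly between
the endpoints of the other. -/
def HeadsOut (x y : Arrow) : Prop :=
  ¬ Between x.t x.h y.h ∧ ¬ Between y.t y.h x.h

/-- The order-two invariant counting heads-out linked pairs, weighted by signs.
Each unordered pair is counted once, via the ordering of the tails. -/
def v21 (D : Finset Arrow) : ℤ :=
  ∑ p ∈ (D ×ˢ D).filter (fun p => p.1.t < p.2.t ∧ Linked p.1 p.2 ∧ HeadsOut p.1 p.2),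
    p.1.sgn * p.2.sgn

/-- The order-two invariant counting heads-in linked pairs, weighted by signs.
Each unordered pair is counted once, via the ordering of the tails. -/
def v22 (D : Finset Arrow) : ℤ :=
  ∑ p ∈ (D ×ˢ D).filter (fun p => p.1.t < p.2.t ∧ Linked p.1 p.2 ∧ HeadsIn p.1 p.2),
    p.1.sgn * p.2.sgn

lemma between_iff_mul_neg {a b p : ℝ} : Between a b p ↔ (p - a) * (p - b) < 0 := by
  simp only [Between, mul_neg_iff, sub_pos, sub_neg]
  tauto

lemma sub_mul_sub_pos_of_not_between {p q a : ℝ} (h : ¬ Between p q a) (hap : a ≠ p)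
    (haq : a ≠ q) : 0 < (p - a) * (q - a) := by
  rw [between_iff_mul_neg, not_lt] at h
  have hne : (p - a) * (q - a) ≠ 0 :=
    mul_ne_zero (sub_ne_zero.2 hap.symm) (sub_ne_zero.2 haq.symm)
  exact lt_of_le_of_ne (by linarith [show (a - p) * (a - q) = (p - a) * (q - a) by ring]) hne.symm

lemma between_iff_between_of_mul_pos {a b c d p q : ℝ} (ha : 0 < (p - a) * (q - c))
    (hb : 0 < (p - b) * (q - d)) : Between a b p ↔ Between c d q := by
  rw [between_iff_mul_neg, between_iff_mul_neg]
  refine neg_iff_neg_of_mul_pos ?_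
  linarith [mul_pos ha hb,
    show (p - a) * (p - b) * ((q - c) * (q - d)) = (p - a) * (q - c) * ((p - b) * (q - d)) by ring]

lemma xor_neg_iff_mul_neg {R : Type*} [Ring R] [LinearOrder R] [IsStrictOrderedRing R]
    {u v : R} (hu : u ≠ 0) (hv : v ≠ 0) : Xor (u < 0) (v < 0) ↔ u * v < 0 := by
  rcases hu.lt_or_gt with hu | hu <;> rcases hv.lt_or_gt with hv | hv <;>
    simp [Xor, mul_neg_iff, hu, hv, hu.le, hv.le, not_lt.2]

/-- Both sides say that `(y.t - x.t) * (y.t - x.h) * (y.h - x.t) * (y.h - x.h) < 0`. -/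
lemma linked_comm {x y : Arrow} (htt : x.t ≠ y.t) (hth : x.t ≠ y.h) (hht : x.h ≠ y.t)
    (hhh : x.h ≠ y.h) : Linked x y ↔ Linked y x := by
  have hne {a b : ℝ} (h : a ≠ b) : b - a ≠ 0 := sub_ne_zero.2 h.symm
  simp only [Linked, Xor', between_iff_mul_neg]
  rw [xor_neg_iff_mul_neg (mul_ne_zero (hne htt) (hne hht)) (mul_ne_zero (hne hth) (hne hhh)),
    xor_neg_iff_mul_neg (mul_ne_zero (hne htt.symm) (hne hth.symm))
      (mul_ne_zero (hne hht.symm) (hne hhh.symm)), ne_comm]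
  ring_nf

def linkDelta (x y : Arrow) : ℤ := if Linked x y then delta x y else 0

lemma linkDelta_self (x : Arrow) : linkDelta x x = 0 :=
  if_neg fun h => h.1 rfl

lemma linkDelta_congr {x y x' y' : Arrow} (hne : x ≠ y ↔ x' ≠ y')
    (ht : Between x.t x.h y.t ↔ Between x'.t x'.h y'.t)
    (hh : Between x.t x.h y.h ↔ Between x'.t x'.h y'.h) : linkDelta x y = linkDelta x' y' := by
  simp only [linkDelta, Linked, delta, hne, ht, hh]
  congr

lemma index_eq_sum (D : Finset Arrow) (x : Arrow) :
    index D x = ∑ y ∈ D, linkDelta x y * x.sgn * y.sgn := by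
  simp only [index, linkDelta, Finset.sum_filter, ite_mul, zero_mul]

lemma IsEndpoint.tail {D : Finset Arrow} {a : Arrow} (ha : a ∈ D) : IsEndpoint D a.t :=
  ⟨a, ha, Or.inl rfl⟩

lemma IsEndpoint.head {D : Finset Arrow} {a : Arrow} (ha : a ∈ D) : IsEndpoint D a.h :=
  ⟨a, ha, Or.inr rfl⟩

lemma Adjacent.sub_mul_sub_pos {D : Finset Arrow} {p q a : ℝ} (h : Adjacent D p q)
    (ha : IsEndpoint D a) (hap : a ≠ p) (haq : a ≠ q) : 0 < (p - a) * (q - a) :=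
  sub_mul_sub_pos_of_not_between (h.2.2.2 a ha) hap haq

section ReidemeisterTwo

variable {D : Finset Arrow} (hD : IsGaussDiagram D) {i j : Arrow} (hi : i ∈ D) (hj : j ∈ D)
  (hheads : Adjacent D i.h j.h) (htails : Adjacent D i.t j.t)
include hD hi hj hheads htails

lemma linkDelta_right_eq {x : Arrow} (hx : x ∈ D) (hxi : x ≠ i) (hxj : x ≠ j) :
    linkDelta x i = linkDelta x j := by
  obtain ⟨htt, hth, hht, hhh⟩ := hD.2.2 x hx i hi hxi
  obtain ⟨htt', hth', hht', hhh'⟩ := hD.2.2 x hx j hj hxj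
  refine linkDelta_congr (iff_of_true hxi hxj) ?_ ?_ <;>
    refine between_iff_between_of_mul_pos ?_ ?_
  · exact htails.sub_mul_sub_pos (.tail hx) htt htt'
  · exact htails.sub_mul_sub_pos (.head hx) hht hht'
  · exact hheads.sub_mul_sub_pos (.tail hx) hth hth'
  · exact hheads.sub_mul_sub_pos (.head hx) hhh hhh'

lemma linkDelta_left_eq {y : Arrow} (hy : y ∈ D) (hyi : y ≠ i) (hyj : y ≠ j) :
    linkDelta i y = linkDelta j y := by
  obtain ⟨htt, hth, hht, hhh⟩ := hD.2.2 y hy i hi hyi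
  obtain ⟨htt', hth', hht', hhh'⟩ := hD.2.2 y hy j hj hyj
  refine linkDelta_congr (iff_of_true hyi.symm hyj.symm) ?_ ?_ <;>
    refine between_iff_between_of_mul_pos ?_ ?_
  · linarith [htails.sub_mul_sub_pos (.tail hy) htt htt']
  · linarith [hheads.sub_mul_sub_pos (.tail hy) hth hth']
  · linarith [htails.sub_mul_sub_pos (.head hy) hht hht']
  · linarith [hheads.sub_mul_sub_pos (.head hy) hhh hhh']

variable (hij : i ≠ j)
include hij

lemma between_head_iff_not_between_head :
    Between i.t i.h j.h ↔ ¬ Between j.t j.h i.h := by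
  obtain ⟨-, hth, hht, hhh⟩ := hD.2.2 i hi j hj hij
  have hi_ne := hD.2.1 i hi
  -- `i.h, j.h` lie on the same side of `i.t`, and `i.t, j.t` on the same side of `i.h`.
  have hK : 0 < (j.h - i.t) * (i.h - j.t) := by
    refine pos_of_mul_pos_right (a := (i.h - i.t) ^ 2) ?_ (sq_nonneg _)
    linarith [mul_pos (hheads.sub_mul_sub_pos (.tail hi) hi_ne hth)
      (htails.sub_mul_sub_pos (.head hi) hi_ne.symm hht)]
  have hsq : 0 < (j.h - i.h) ^ 2 := sq_pos_of_ne_zero (sub_ne_zero.2 hhh.symm)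
  rw [between_iff_mul_neg, between_iff_mul_neg, ← xor_iff_iff_not,
    xor_neg_iff_mul_neg (mul_ne_zero (sub_ne_zero.2 hth.symm) (sub_ne_zero.2 hhh.symm))
      (mul_ne_zero (sub_ne_zero.2 hht) (sub_ne_zero.2 hhh))]
  linarith [mul_pos hsq hK]

lemma linkDelta_eq_neg_linkDelta : linkDelta i j = -linkDelta j i := by
  obtain ⟨htt, hth, hht, hhh⟩ := hD.2.2 i hi j hj hij
  have hhead := between_head_iff_not_between_head hD hi hj hheads htails hij
  by_cases hL : Linked j i
  · simp only [linkDelta, delta, if_pos hL, if_pos ((linked_comm htt hth hht hhh).2 hL)]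
    by_cases hb : Between j.t j.h i.h <;> simp [hb, hhead]
  · simp [linkDelta, hL, mt (linked_comm htt hth hht hhh).1 hL]

variable (hsgn : i.sgn = -j.sgn)
include hsgn

lemma index_add_index_eq_zero : index D i + index D j = 0 := by
  rw [index_eq_sum, index_eq_sum, ← Finset.sum_add_distrib,
    Finset.sum_eq_add_of_mem i j hi hj hij fun y hy ⟨hyi, hyj⟩ => ?_]
  · rw [linkDelta_self, linkDelta_self, linkDelta_eq_neg_linkDelta hD hi hj hheads htails hij]
    ring
  · rw [linkDelta_left_eq hD hi hj hheads htails hy hyi hyj, hsgn]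
    ring

lemma index_erase_erase {x : Arrow} (hx : x ∈ D) (hxi : x ≠ i) (hxj : x ≠ j) :
    index ((D.erase i).erase j) x = index D x := by
  have hj' : j ∈ D.erase i := Finset.mem_erase.2 ⟨hij.symm, hj⟩
  rw [index_eq_sum, index_eq_sum, ← Finset.sum_erase_add _ _ hi, ← Finset.sum_erase_add _ _ hj',
    linkDelta_right_eq hD hi hj hheads htails hx hxi hxj, hsgn]
  ring

end ReidemeisterTwo

/-- in the configuration of the second Reidemeister move,
`I_D(i) = -I_D(j)`, and deleting both arrows does not change the index of any
other arrow. -/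
theorem stmt1 (D : Finset Arrow) (hD : IsGaussDiagram D) (i j : Arrow)
    (hi : i ∈ D) (hj : j ∈ D) (hij : i ≠ j) (hsgn : i.sgn = -j.sgn)
    (hheads : Adjacent D i.h j.h) (htails : Adjacent D i.t j.t) :
    index D i = -index D j ∧
      ∀ x ∈ D, x ≠ i → x ≠ j → index ((D.erase i).erase j) x = index D x :=
  ⟨eq_neg_of_add_eq_zero_left (index_add_index_eq_zero hD hi hj hheads htails hij hsgn),
    fun _ hx hxi hxj => index_erase_erase hD hi hj hheads htails hij hsgn hx hxi hxj⟩

end Gauss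
end
end

section
/- Let D be a Gauss diagram on the Wilson line containing two distinct arrows i and j such that the head of i and the head of j are adjacent endpoints of D and the tail of i and the tail of j are adjacent endpoints of D. Then every arrow x of D with x ∉ {i, j} is linked with i if and only if it is linked with j; consequently deg_D(i) ≡ deg_D(j) (mod 2). (This is the verification of the second-Reidemeister-move axiom for the Gaussian parity, in which an arrow is even or odd according to the parity of its degree in the intersection graph.) -/
noncomputable section

namespace Gauss

attribute [local instance] Classical.propDecidable

/-!
Whether `r` lies between `a` and `b` depends only on which of `a`, `b` lie below `r`. Since no
endpoint separates `i.t` from `j.t` or `i.h` from `j.h`, every endpoint of another arrow lies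
between the ends of `i` iff it lies between the ends of `j`. The degrees are even equal: linking
is symmetric, so the transposition of `i` and `j` maps the arrows linked with `i` onto those
linked with `j`.
-/

lemma between_iff_xor {a b r : ℝ} (ha : r ≠ a) (hb : r ≠ b) :
    Between a b r ↔ Xor (a < r) (b < r) := by
  unfold Between Xor
  constructor
  · rintro (⟨har, hrb⟩ | ⟨hbr, hra⟩)
    · exact Or.inl ⟨har, hrb.not_gt⟩
    · exact Or.inr ⟨hbr, hra.not_gt⟩
  · rintro (⟨har, hbr⟩ | ⟨hbr, har⟩)
    · exact Or.inl ⟨har, (not_lt.mp hbr).lt_of_ne hb⟩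
    · exact Or.inr ⟨hbr, (not_lt.mp har).lt_of_ne ha⟩

lemma lt_iff_lt_of_not_between {a b r : ℝ} (h : ¬ Between a b r) (ha : r ≠ a) (hb : r ≠ b) :
    a < r ↔ b < r := by
  by_contra hab
  exact h ((between_iff_xor ha hb).mpr ((xor_iff_not_iff _ _).mpr hab))

lemma between_iff_between_of_not_between {a a' b b' r : ℝ} (ha : ¬ Between a a' r)
    (hb : ¬ Between b b' r) (hra : r ≠ a) (hra' : r ≠ a') (hrb : r ≠ b) (hrb' : r ≠ b') :
    Between a b r ↔ Between a' b' r := by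
  rw [between_iff_xor hra hrb, between_iff_xor hra' hrb', lt_iff_lt_of_not_between ha hra hra',
    lt_iff_lt_of_not_between hb hrb hrb']

lemma between_iff_between_of_adjacent {D : Finset Arrow} {i j : Arrow}
    (htails : Adjacent D i.t j.t) (hheads : Adjacent D i.h j.h) {r : ℝ} (hr : IsEndpoint D r)
    (hit : r ≠ i.t) (hjt : r ≠ j.t) (hih : r ≠ i.h) (hjh : r ≠ j.h) :
    Between i.t i.h r ↔ Between j.t j.h r :=
  between_iff_between_of_not_between (htails.2.2.2 r hr) (hheads.2.2.2 r hr) hit hjt hih hjh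

lemma linked_iff_linked_of_adjacent {D : Finset Arrow} (hD : IsGaussDiagram D) {i j x : Arrow}
    (hi : i ∈ D) (hj : j ∈ D) (hx : x ∈ D) (hxi : x ≠ i) (hxj : x ≠ j)
    (htails : Adjacent D i.t j.t) (hheads : Adjacent D i.h j.h) :
    Linked i x ↔ Linked j x := by
  obtain ⟨hti, hthi, hhti, hhi⟩ := hD.2.2 x hx i hi hxi
  obtain ⟨htj, hthj, hhtj, hhj⟩ := hD.2.2 x hx j hj hxj
  rw [Linked, Linked,
    between_iff_between_of_adjacent htails hheads ⟨x, hx, .inl rfl⟩ hti htj hthi hthj,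
    between_iff_between_of_adjacent htails hheads ⟨x, hx, .inr rfl⟩ hhti hhtj hhi hhj]
  exact and_congr_left' (iff_of_true hxi.symm hxj.symm)

lemma degree_eq_of_linked_iff {D : Finset Arrow} {i j : Arrow} (hi : i ∈ D) (hj : j ∈ D)
    (hlinked : Linked i j ↔ Linked j i)
    (hother : ∀ x ∈ D, x ≠ i → x ≠ j → (Linked i x ↔ Linked j x)) :
    degree D i = degree D j := by
  refine Finset.card_equiv (Equiv.swap i j) fun y => ?_
  simp only [Finset.mem_filter]
  rcases eq_or_ne y i with rfl | hyi
  · simp [Linked]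
  rcases eq_or_ne y j with rfl | hyj
  · simp [hi, hj, hlinked]
  rw [Equiv.swap_apply_of_ne_of_ne hyi hyj]
  exact and_congr_right (hother y · hyi hyj)

/-- in the configuration of the second Reidemeister move, every
other arrow is linked with `i` iff it is linked with `j`; consequently the
degrees of `i` and `j` in the intersection graph agree mod 2. -/
theorem stmt3 (D : Finset Arrow) (hD : IsGaussDiagram D) (i j : Arrow)
    (hi : i ∈ D) (hj : j ∈ D) (hij : i ≠ j)
    (hheads : Adjacent D i.h j.h) (htails : Adjacent D i.t j.t) :
    (∀ x ∈ D, x ≠ i → x ≠ j → (Linked i x ↔ Linked j x)) ∧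
    degree D i % 2 = degree D j % 2 := by
  have hother : ∀ x ∈ D, x ≠ i → x ≠ j → (Linked i x ↔ Linked j x) :=
    fun x hx hxi hxj => linked_iff_linked_of_adjacent hD hi hj hx hxi hxj htails hheads
  obtain ⟨htt, hth, hht, hhh⟩ := hD.2.2 i hi j hj hij
  refine ⟨hother, ?_⟩
  rw [degree_eq_of_linked_iff hi hj (linked_comm htt hth hht hhh) hother]

end Gauss
end
end

section
/- Let D be a Gauss diagram on the Wilson line, let e be the smallest endpoint of D and let z be the arrow of D having e as an endpoint. Let 1·D be the rotated diagram obtained from D by replacing the endpoint e of z by a real number larger than all endpoints of D, keeping its role as head or tail of z and keeping all signs and all other endpoints unchanged. Then two arrows of 1·D are linked if and only if the corresponding arrows of D are linked, I_{1·D}(y) = I_D(y) for every arrow y ≠ z, and I_{1·D}(z) = −I_D(z). In particular, if D has zero index then 1·D has zero index. -/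
noncomputable section

namespace Gauss

attribute [local instance] Classical.propDecidable

/-!
Every endpoint of `D` other than those of `z` lies strictly between `e` and `M`, so moving the
endpoint `e` of `z` to `M` puts each of them on the other side of `z`. Seen from `z`, both
endpoints of another arrow `y` switch side, so `z` and `y` stay linked or unlinked while `δ(z, y)`
changes sign. Seen from `y`, neither `e` nor `M` lies between its endpoints, so nothing changes.
Hence only the summands of `I(z)` change, and each of them changes sign.
-/

lemma linked_iff {x y : Arrow} :
    Linked x y ↔ x ≠ y ∧ Xor (Between x.t x.h y.t) (Between x.t x.h y.h) := Iff.rfl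

lemma not_linked_self (x : Arrow) : ¬ Linked x x := fun h => h.1 rfl

lemma between_comm (a b p : ℝ) : Between a b p ↔ Between b a p := or_comm

lemma not_between_of_le {a b p : ℝ} (ha : p ≤ a) (hb : p ≤ b) : ¬ Between a b p := by
  rintro (⟨h1, h2⟩ | ⟨h1, h2⟩) <;> linarith

lemma not_between_of_lt {a b p : ℝ} (ha : a < p) (hb : b < p) : ¬ Between a b p := by
  rintro (⟨h1, h2⟩ | ⟨h1, h2⟩) <;> linarith

lemma between_iff_not_between {a b o p : ℝ} (hap : a < p) (hpb : p < b) (hpo : p ≠ o) :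
    Between b o p ↔ ¬ Between a o p := by
  rcases hpo.lt_or_gt with h | h
  · exact iff_of_false (not_between_of_le hpb.le h.le) (not_not.mpr (Or.inl ⟨hap, h⟩))
  · exact iff_of_true (Or.inr ⟨h, hpb⟩) (not_between_of_lt hap h)

section Linking

variable {x x' y y' : Arrow}

lemma linked_congr_right (hy : x ≠ y) (hy' : x ≠ y')
    (ht : Between x.t x.h y'.t ↔ Between x.t x.h y.t)
    (hh : Between x.t x.h y'.h ↔ Between x.t x.h y.h) : Linked x y' ↔ Linked x y := by
  rw [linked_iff, linked_iff, ht, hh]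
  exact and_congr_left' (iff_of_true hy' hy)

lemma linked_congr_left_of_between_iff_not (hx : x ≠ y) (hx' : x' ≠ y)
    (ht : Between x'.t x'.h y.t ↔ ¬ Between x.t x.h y.t)
    (hh : Between x'.t x'.h y.h ↔ ¬ Between x.t x.h y.h) : Linked x' y ↔ Linked x y := by
  rw [linked_iff, linked_iff, ht, hh, xor_not_not]
  exact and_congr_left' (iff_of_true hx' hx)

def indexTerm (x y : Arrow) : ℤ := if Linked x y then delta x y * x.sgn * y.sgn else 0

lemma indexTerm_self (x : Arrow) : indexTerm x x = 0 := if_neg (not_linked_self x)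

lemma indexTerm_congr_right (hy : x ≠ y) (hy' : x ≠ y') (hs : y'.sgn = y.sgn)
    (ht : Between x.t x.h y'.t ↔ Between x.t x.h y.t)
    (hh : Between x.t x.h y'.h ↔ Between x.t x.h y.h) : indexTerm x y' = indexTerm x y := by
  have hδ : delta x y' = delta x y := by simp only [delta, hh]
  simp only [indexTerm, linked_congr_right hy hy' ht hh, hδ, hs]

lemma indexTerm_eq_neg_of_between_iff_not (hx : x ≠ y) (hx' : x' ≠ y) (hs : x'.sgn = x.sgn)
    (ht : Between x'.t x'.h y.t ↔ ¬ Between x.t x.h y.t)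
    (hh : Between x'.t x'.h y.h ↔ ¬ Between x.t x.h y.h) :
    indexTerm x' y = -indexTerm x y := by
  have hδ : delta x' y = -delta x y := by
    by_cases hb : Between x.t x.h y.h <;> simp [delta, hh, hb]
  by_cases hl : Linked x y
  · simp only [indexTerm, linked_congr_left_of_between_iff_not hx hx' ht hh, hl, if_true, hδ, hs]
    ring
  · simp only [indexTerm, linked_congr_left_of_between_iff_not hx hx' ht hh, hl, if_false,
      neg_zero]

end Linking

lemma index_eq_sum_indexTerm (D : Finset Arrow) (x : Arrow) :
    index D x = ∑ y ∈ D, indexTerm x y :=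
  Finset.sum_filter _ _

lemma index_insert {D : Finset Arrow} {y : Arrow} (hy : y ∉ D) (x : Arrow) :
    index (insert y D) x = indexTerm x y + index D x := by
  simp only [index_eq_sum_indexTerm, Finset.sum_insert hy]

lemma index_erase {D : Finset Arrow} {y : Arrow} (hy : y ∈ D) (x : Arrow) :
    index (D.erase y) x = index D x - indexTerm x y := by
  simp only [index_eq_sum_indexTerm, ← Finset.sum_erase_add D _ hy, add_sub_cancel_right]

lemma index_eq_neg_of_indexTerm_eq_neg {D : Finset Arrow} {x x' : Arrow}
    (h : ∀ y ∈ D, indexTerm x' y = -indexTerm x y) : index D x' = -index D x := by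
  simp only [index_eq_sum_indexTerm, ← Finset.sum_neg_distrib]
  exact Finset.sum_congr rfl h

def moveEndpoint (z : Arrow) (e M : ℝ) : Arrow :=
  if e = z.t then ⟨M, z.h, z.sgn⟩ else ⟨z.t, M, z.sgn⟩

section MoveEndpoint

variable {D : Finset Arrow} {z w : Arrow} {e M : ℝ}

lemma moveEndpoint_sgn : (moveEndpoint z e M).sgn = z.sgn := by
  unfold moveEndpoint; split_ifs <;> rfl

lemma moveEndpoint_notMem (hM : ∀ r, IsEndpoint D r → r < M) : moveEndpoint z e M ∉ D := by
  intro h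
  unfold moveEndpoint at h
  split_ifs at h
  · exact lt_irrefl M (hM _ ⟨_, h, Or.inl rfl⟩)
  · exact lt_irrefl M (hM _ ⟨_, h, Or.inr rfl⟩)

lemma ne_moveEndpoint_of_mem (hM : ∀ r, IsEndpoint D r → r < M) (hw : w ∈ D) :
    w ≠ moveEndpoint z e M :=
  fun h => moveEndpoint_notMem hM (h ▸ hw)

lemma moveEndpoint_notMem_erase (hM : ∀ r, IsEndpoint D r → r < M) :
    moveEndpoint z e M ∉ D.erase z :=
  fun h => moveEndpoint_notMem hM (Finset.mem_of_mem_erase h)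

lemma between_moveEndpoint_iff_not {p : ℝ} (he : e = z.t ∨ e = z.h) (hep : e < p) (hpM : p < M)
    (hpt : p ≠ z.t) (hph : p ≠ z.h) :
    Between (moveEndpoint z e M).t (moveEndpoint z e M).h p ↔ ¬ Between z.t z.h p := by
  unfold moveEndpoint
  split_ifs with het
  · rw [← het]
    exact between_iff_not_between hep hpM hph
  · rw [← he.resolve_left het, between_comm z.t, between_comm z.t]
    exact between_iff_not_between hep hpM hpt

lemma between_moveEndpoint_congr (het : e ≤ w.t) (heh : e ≤ w.h) (htM : w.t < M) (hhM : w.h < M)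
    (he : e = z.t ∨ e = z.h) :
    (Between w.t w.h (moveEndpoint z e M).t ↔ Between w.t w.h z.t) ∧
      (Between w.t w.h (moveEndpoint z e M).h ↔ Between w.t w.h z.h) := by
  have hM : ¬ Between w.t w.h M := not_between_of_lt htM hhM
  have he' : ¬ Between w.t w.h e := not_between_of_le het heh
  unfold moveEndpoint
  split_ifs with hzt
  · exact ⟨iff_of_false hM (hzt ▸ he'), Iff.rfl⟩
  · exact ⟨Iff.rfl, iff_of_false hM (he.resolve_left hzt ▸ he')⟩

lemma between_moveEndpoint_iff_not_of_mem (hD : IsGaussDiagram D) (hz : z ∈ D)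
    (he : e = z.t ∨ e = z.h) (hmin : ∀ r, IsEndpoint D r → e ≤ r)
    (hM : ∀ r, IsEndpoint D r → r < M) (hw : w ∈ D) (hwz : w ≠ z) :
    (Between (moveEndpoint z e M).t (moveEndpoint z e M).h w.t ↔ ¬ Between z.t z.h w.t) ∧
      (Between (moveEndpoint z e M).t (moveEndpoint z e M).h w.h ↔ ¬ Between z.t z.h w.h) := by
  have key : ∀ p, IsEndpoint D p → p ≠ z.t → p ≠ z.h →
      (Between (moveEndpoint z e M).t (moveEndpoint z e M).h p ↔ ¬ Between z.t z.h p) := by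
    intro p hp hpt hph
    have hpe : p ≠ e := by rcases he with rfl | rfl <;> assumption
    exact between_moveEndpoint_iff_not he ((hmin p hp).lt_of_ne hpe.symm) (hM p hp) hpt hph
  obtain ⟨htt, hth, hht, hhh⟩ := hD.2.2 w hw z hz hwz
  exact ⟨key _ ⟨w, hw, Or.inl rfl⟩ htt hth, key _ ⟨w, hw, Or.inr rfl⟩ hht hhh⟩

lemma between_moveEndpoint_congr_of_mem (he : e = z.t ∨ e = z.h)
    (hmin : ∀ r, IsEndpoint D r → e ≤ r) (hM : ∀ r, IsEndpoint D r → r < M)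
    (hw : w ∈ D) :
    (Between w.t w.h (moveEndpoint z e M).t ↔ Between w.t w.h z.t) ∧
      (Between w.t w.h (moveEndpoint z e M).h ↔ Between w.t w.h z.h) :=
  between_moveEndpoint_congr (hmin _ ⟨w, hw, Or.inl rfl⟩) (hmin _ ⟨w, hw, Or.inr rfl⟩)
    (hM _ ⟨w, hw, Or.inl rfl⟩) (hM _ ⟨w, hw, Or.inr rfl⟩) he

lemma linked_moveEndpoint_iff (hD : IsGaussDiagram D) (hz : z ∈ D) (he : e = z.t ∨ e = z.h)
    (hmin : ∀ r, IsEndpoint D r → e ≤ r) (hM : ∀ r, IsEndpoint D r → r < M)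
    {y : Arrow} (hy : y ∈ D) (hw : w ∈ D) :
    Linked (if y = z then moveEndpoint z e M else y) (if w = z then moveEndpoint z e M else w) ↔
      Linked y w := by
  by_cases hyz : y = z <;> by_cases hwz : w = z
  · simp only [hyz, hwz, if_true, not_linked_self]
  · obtain ⟨ht, hh⟩ := between_moveEndpoint_iff_not_of_mem hD hz he hmin hM hw hwz
    simp only [hyz, hwz, if_true, if_false]
    exact linked_congr_left_of_between_iff_not (Ne.symm hwz)
      (ne_moveEndpoint_of_mem hM hw).symm ht hh
  · obtain ⟨ht, hh⟩ := between_moveEndpoint_congr_of_mem he hmin hM hy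
    simp only [hyz, hwz, if_true, if_false]
    exact linked_congr_right hyz (ne_moveEndpoint_of_mem hM hy) ht hh
  · simp only [hyz, hwz, if_false]

lemma index_moveEndpoint_of_ne (hz : z ∈ D) (he : e = z.t ∨ e = z.h)
    (hmin : ∀ r, IsEndpoint D r → e ≤ r) (hM : ∀ r, IsEndpoint D r → r < M)
    {y : Arrow} (hy : y ∈ D) (hyz : y ≠ z) :
    index (insert (moveEndpoint z e M) (D.erase z)) y = index D y := by
  obtain ⟨ht, hh⟩ := between_moveEndpoint_congr_of_mem he hmin hM hy
  rw [index_insert (moveEndpoint_notMem_erase hM), index_erase hz,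
    indexTerm_congr_right hyz (ne_moveEndpoint_of_mem hM hy) moveEndpoint_sgn ht hh,
    add_sub_cancel]

lemma index_moveEndpoint_self (hD : IsGaussDiagram D) (hz : z ∈ D) (he : e = z.t ∨ e = z.h)
    (hmin : ∀ r, IsEndpoint D r → e ≤ r) (hM : ∀ r, IsEndpoint D r → r < M) :
    index (insert (moveEndpoint z e M) (D.erase z)) (moveEndpoint z e M) = -index D z := by
  have hterm : ∀ w ∈ D.erase z, indexTerm (moveEndpoint z e M) w = -indexTerm z w := by
    intro w hw
    obtain ⟨hwz, hw⟩ := Finset.mem_erase.mp hw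
    obtain ⟨ht, hh⟩ := between_moveEndpoint_iff_not_of_mem hD hz he hmin hM hw hwz
    exact indexTerm_eq_neg_of_between_iff_not (Ne.symm hwz)
      (ne_moveEndpoint_of_mem hM hw).symm moveEndpoint_sgn ht hh
  rw [index_insert (moveEndpoint_notMem_erase hM), indexTerm_self, zero_add,
    index_eq_neg_of_indexTerm_eq_neg hterm, index_erase hz, indexTerm_self, sub_zero]

end MoveEndpoint

/-- rotating the smallest endpoint of the diagram past the right
end (the action of `1 ∈ ℤ_{2n}`) preserves linkedness, preserves the index of
every arrow other than the rotated one, negates the index of the rotated arrow,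
and preserves the zero-index property. -/
theorem stmt5 (D : Finset Arrow) (hD : IsGaussDiagram D) (z : Arrow) (hz : z ∈ D)
    (e : ℝ) (he : e = z.t ∨ e = z.h) (hmin : ∀ r, IsEndpoint D r → e ≤ r)
    (M : ℝ) (hM : ∀ r, IsEndpoint D r → r < M) :
    let z' : Arrow := if e = z.t then ⟨M, z.h, z.sgn⟩ else ⟨z.t, M, z.sgn⟩
    let f : Arrow → Arrow := fun a => if a = z then z' else a
    let D' : Finset Arrow := insert z' (D.erase z)
    (∀ y ∈ D, ∀ w ∈ D, (Linked (f y) (f w) ↔ Linked y w)) ∧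
    (∀ y ∈ D, y ≠ z → index D' y = index D y) ∧
    index D' z' = -index D z ∧
    ((∀ x ∈ D, index D x = 0) → ∀ x ∈ D', index D' x = 0) := by
  intro z' f D'
  have hindex : ∀ y ∈ D, y ≠ z → index D' y = index D y :=
    fun y hy hyz => index_moveEndpoint_of_ne hz he hmin hM hy hyz
  have hindex_z : index D' z' = -index D z := index_moveEndpoint_self hD hz he hmin hM
  refine ⟨fun y hy w hw => linked_moveEndpoint_iff hD hz he hmin hM hy hw, hindex, hindex_z, ?_⟩
  intro h0 x hx
  rcases Finset.mem_insert.mp hx with rfl | hx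
  · rw [hindex_z, h0 z hz, neg_zero]
  · obtain ⟨hxz, hx⟩ := Finset.mem_erase.mp hx
    rw [hindex x hx hxz, h0 x hx]

end Gauss
end
end

section
/- For every Gauss diagram D on the Wilson line, the sum of the indices of all arrows of D satisfies Σ_{x ∈ D} I_D(x) = 2·(v22(D) − v21(D)). Consequently, for a linked pair {x,y}, δ(x,y) + δ(y,x) equals 2 if the pair is heads-in, −2 if the pair is heads-out, and 0 otherwise. -/
noncomputable section

namespace Gauss

attribute [local instance] Classical.propDecidable

lemma xor_between_iff_mul_neg {a b c d : ℝ} (hca : c ≠ a) (hcb : c ≠ b) (hda : d ≠ a)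
    (hdb : d ≠ b) :
    Xor (Between a b c) (Between a b d) ↔ (c - a) * (c - b) * ((d - a) * (d - b)) < 0 := by
  have hc : 0 ≤ (c - a) * (c - b) ↔ 0 < (c - a) * (c - b) :=
    (mul_ne_zero (sub_ne_zero.2 hca) (sub_ne_zero.2 hcb)).symm.le_iff_lt
  have hd : 0 ≤ (d - a) * (d - b) ↔ 0 < (d - a) * (d - b) :=
    (mul_ne_zero (sub_ne_zero.2 hda) (sub_ne_zero.2 hdb)).symm.le_iff_lt
  rw [mul_neg_iff, between_iff_mul_neg, between_iff_mul_neg, Xor, not_lt, not_lt, hc, hd]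
  tauto

lemma xor_between_comm {a b c d : ℝ} (hac : a ≠ c) (had : a ≠ d) (hbc : b ≠ c) (hbd : b ≠ d) :
    Xor (Between a b c) (Between a b d) ↔ Xor (Between c d a) (Between c d b) := by
  rw [xor_between_iff_mul_neg hac.symm hbc.symm had.symm hbd.symm,
    xor_between_iff_mul_neg hac had hbc hbd]
  ring_nf

lemma Linked.symm {x y : Arrow} (hxy : Linked x y) (htt : x.t ≠ y.t) (hth : x.t ≠ y.h)
    (hht : x.h ≠ y.t) (hhh : x.h ≠ y.h) : Linked y x :=
  ⟨hxy.1.symm, (xor_between_comm htt hth hht hhh).1 hxy.2⟩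

lemma delta_add_delta (x y : Arrow) :
    delta x y + delta y x =
      2 * ((if HeadsIn x y then 1 else 0) - if HeadsOut x y then 1 else 0) := by
  unfold delta HeadsIn HeadsOut
  split_ifs <;> tauto

def linkedPairs (D : Finset Arrow) : Finset (Arrow × Arrow) :=
  (D ×ˢ D).filter (fun p => Linked p.1 p.2)

lemma mem_linkedPairs {D : Finset Arrow} {p : Arrow × Arrow} :
    p ∈ linkedPairs D ↔ (p.1 ∈ D ∧ p.2 ∈ D) ∧ Linked p.1 p.2 := by
  rw [linkedPairs, Finset.mem_filter, Finset.mem_product]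

lemma IsGaussDiagram.tail_ne_of_mem_linkedPairs {D : Finset Arrow} (hD : IsGaussDiagram D)
    {p : Arrow × Arrow} (hp : p ∈ linkedPairs D) : p.1.t ≠ p.2.t :=
  let ⟨⟨hx, hy⟩, hxy⟩ := mem_linkedPairs.1 hp
  (hD.2.2 _ hx _ hy hxy.1).1

lemma IsGaussDiagram.swap_mem_linkedPairs {D : Finset Arrow} (hD : IsGaussDiagram D)
    {p : Arrow × Arrow} (hp : p ∈ linkedPairs D) : p.swap ∈ linkedPairs D := by
  obtain ⟨⟨hx, hy⟩, hxy⟩ := mem_linkedPairs.1 hp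
  obtain ⟨htt, hth, hht, hhh⟩ := hD.2.2 _ hx _ hy hxy.1
  exact mem_linkedPairs.2 ⟨⟨hy, hx⟩, hxy.symm htt hth hht hhh⟩

lemma sum_index_eq_sum_linkedPairs (D : Finset Arrow) :
    ∑ x ∈ D, index D x = ∑ p ∈ linkedPairs D, delta p.1 p.2 * p.1.sgn * p.2.sgn := by
  simp only [index, linkedPairs, Finset.sum_filter, Finset.sum_product]

lemma sum_eq_sum_filter_lt_add_swap {α β M : Type*} [LinearOrder β] [AddCommMonoid M]
    (s : Finset (α × α)) (hs : ∀ p ∈ s, p.swap ∈ s) (key : α → β)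
    (hkey : ∀ p ∈ s, key p.1 ≠ key p.2) (f : α × α → M) :
    ∑ p ∈ s, f p = ∑ p ∈ s.filter (fun p => key p.1 < key p.2), (f p + f p.swap) := by
  rw [← s.sum_filter_add_sum_filter_not (fun p => key p.1 < key p.2), Finset.sum_add_distrib]
  congr 1
  refine Finset.sum_nbij' Prod.swap Prod.swap ?_ ?_ (fun _ _ => rfl) (fun _ _ => rfl)
    (fun _ _ => rfl)
  · intro p hp
    simp only [Finset.mem_filter, not_lt] at hp ⊢
    exact ⟨hs p hp.1, hp.2.lt_of_ne (hkey p hp.1).symm⟩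
  · intro p hp
    simp only [Finset.mem_filter, not_lt] at hp ⊢
    exact ⟨hs p hp.1, hp.2.le⟩

lemma v22_sub_v21 (D : Finset Arrow) :
    v22 D - v21 D =
      ∑ p ∈ (linkedPairs D).filter (fun p => p.1.t < p.2.t),
        ((if HeadsIn p.1 p.2 then 1 else 0) - if HeadsOut p.1 p.2 then 1 else 0) *
          (p.1.sgn * p.2.sgn) := by
  simp only [v22, v21, linkedPairs, sub_mul, ite_mul, one_mul, zero_mul,
    Finset.sum_sub_distrib, ← Finset.sum_filter, Finset.filter_filter, and_assoc, and_comm]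

/-- the sum of all indices equals `2·(v22 − v21)`; moreover for a
linked pair, `δ(x,y) + δ(y,x)` is `2`, `-2`, or `0` according to whether the
pair is heads-in, heads-out, or mixed. -/
theorem stmt8 (D : Finset Arrow) (hD : IsGaussDiagram D) :
    (∑ x ∈ D, index D x) = 2 * (v22 D - v21 D) ∧
    ∀ x ∈ D, ∀ y ∈ D, Linked x y →
      (HeadsIn x y → delta x y + delta y x = 2) ∧
      (HeadsOut x y → delta x y + delta y x = -2) ∧
      (¬ HeadsIn x y → ¬ HeadsOut x y → delta x y + delta y x = 0) := by
  refine ⟨?_, fun x _ y _ _ => ?_⟩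
  · rw [sum_index_eq_sum_linkedPairs,
      sum_eq_sum_filter_lt_add_swap _ (fun _ => hD.swap_mem_linkedPairs) Arrow.t
        (fun _ => hD.tail_ne_of_mem_linkedPairs),
      v22_sub_v21, Finset.mul_sum]
    refine Finset.sum_congr rfl fun p _ => ?_
    rw [Prod.fst_swap, Prod.snd_swap, ← mul_assoc, ← delta_add_delta]
    ring
  · have hInOut : HeadsIn x y → ¬ HeadsOut x y := fun hIn hOut => hOut.1 hIn.1
    rw [delta_add_delta]
    refine ⟨fun hIn => ?_, fun hOut => ?_, fun hIn hOut => ?_⟩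
    · simp [hIn, hInOut hIn]
    · simp [hOut, mt hInOut (not_not_intro hOut)]
    · simp [hIn, hOut]

end Gauss
end
end

section
/- For every integer n ≥ 1 there exists a solution of the order-n system with c_0 ≠ 0; that is, there exist integers c_0 ≠ 0 and c_{i,j} for i,j ≥ 0 with i + j ≤ n − 1 such that, setting c_{i,j} = (−1)^j·c_0 whenever i + j = n, one has c_{i,j} + c_{i−1,j} + c_{i,j−1} = 0 for all i, j ≥ 1 with i + j ≤ n. (This is the existence of a combinatorial parity formula generated by R^n, and likewise by L^n, on the Wilson line.) -/
/-!
Take `c₀ = 1` and `c i j = (-1)^j · multichoose i (n - i - j)`. On the top diagonal the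
second argument vanishes, giving `(-1)^j`; below it, after the sign `(-1)^j` is factored
out, the equation `BOT` becomes Pascal's rule
`multichoose (i+1) (m+1) = multichoose i (m+1) + multichoose (i+1) m`.
-/

def parityCoeff (m i j : ℕ) : ℤ := (-1) ^ j * (Nat.multichoose i m : ℤ)

theorem parityCoeff_zero (i j : ℕ) : parityCoeff 0 i j = (-1) ^ j := by
  simp [parityCoeff, Nat.multichoose_zero_right]

theorem parityCoeff_pascal (m i j : ℕ) :
    parityCoeff m (i + 1) (j + 1) + parityCoeff (m + 1) i (j + 1)
      + parityCoeff (m + 1) (i + 1) j = 0 := by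
  simp only [parityCoeff, Nat.multichoose_succ_succ, pow_succ]
  push_cast
  ring

theorem stmt9_general (n : ℕ) :
    ∃ (c0 : ℤ) (c : ℕ → ℕ → ℤ), c0 ≠ 0 ∧
      (∀ i j : ℕ, i + j = n → c i j = (-1) ^ j * c0) ∧
      (∀ i j : ℕ, 1 ≤ i → 1 ≤ j → i + j ≤ n →
        c i j + c (i - 1) j + c i (j - 1) = 0) := by
  refine ⟨1, fun i j => parityCoeff (n - i - j) i j, one_ne_zero, ?top, ?bot⟩
  case top =>
    intro i j hij
    have hm : n - i - j = 0 := by omega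
    simp only [hm, parityCoeff_zero, mul_one]
  case bot =>
    intro i j hi hj hij
    obtain ⟨a, rfl⟩ := Nat.exists_eq_add_of_le' hi
    obtain ⟨b, rfl⟩ := Nat.exists_eq_add_of_le' hj
    have hm : n - a - (b + 1) = n - (a + 1) - (b + 1) + 1 := by omega
    have hm' : n - (a + 1) - b = n - (a + 1) - (b + 1) + 1 := by omega
    simpa only [Nat.add_sub_cancel, hm, hm'] using parityCoeff_pascal _ a b

/-- for every `n ≥ 1` the order-`n` system has a solution with
`c₀ ≠ 0`: there are integers `c₀ ≠ 0` and `c i j` which take the value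
`(-1)^j · c₀` whenever `i + j = n` and satisfy the second-Reidemeister-move
equations `c i j + c (i-1) j + c i (j-1) = 0` for all `i, j ≥ 1` with
`i + j ≤ n`.  (Existence of a combinatorial parity formula generated by `Rⁿ`,
and likewise by `Lⁿ`, on the Wilson line.) -/
theorem stmt9 (n : ℕ) (hn : 1 ≤ n) :
    ∃ (c0 : ℤ) (c : ℕ → ℕ → ℤ), c0 ≠ 0 ∧
      (∀ i j : ℕ, i + j = n → c i j = (-1) ^ j * c0) ∧
      (∀ i j : ℕ, 1 ≤ i → 1 ≤ j → i + j ≤ n →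
        c i j + c (i - 1) j + c i (j - 1) = 0) :=
  stmt9_general n
end

section
/- For every even integer n ≥ 2 there exists a symmetric solution of the order-n system with c_0 = 2; that is, there exist integers c_{i,j} for i,j ≥ 0 with i + j ≤ n − 1 satisfying c_{i,j} = c_{j,i} for all i, j, such that, setting c_0 = 2 and c_{i,j} = (−1)^j·c_0 whenever i + j = n, one has c_{i,j} + c_{i−1,j} + c_{i,j−1} = 0 for all i, j ≥ 1 with i + j ≤ n. -/
/-!
Write `n = 2h`. Away from the top level the solution is
`c i j = (-1)^m (C(h-m, d) + C(h-m-1, d))` with `m = min i j` and `d = n - (i + j)`;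
at `d = 0` this is `(-1)^m · 2`, which matches the prescribed top values because `i ≡ j (mod 2)`
there. Off the diagonal the recurrence is Pascal's rule applied to both binomials, on the
diagonal both binomials of the three terms vanish except at the corner `i = j = h`, and
symmetry transfers the recurrence from `j ≤ i` to `i ≤ j`.
-/

theorem recurrence_of_symm_of_le {n : ℕ} {c : ℕ → ℕ → ℤ}
    (hsymm : ∀ i j, i + j ≤ n → c i j = c j i)
    (hle : ∀ i j, 1 ≤ i → 1 ≤ j → i + j ≤ n → j ≤ i → c i j + c (i - 1) j + c i (j - 1) = 0)
    (i j : ℕ) (hi : 1 ≤ i) (hj : 1 ≤ j) (hij : i + j ≤ n) :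
    c i j + c (i - 1) j + c i (j - 1) = 0 := by
  rcases le_total j i with hji | hij'
  · exact hle i j hi hj hij hji
  · rw [hsymm i j hij, hsymm (i - 1) j (by omega), hsymm i (j - 1) (by omega)]
    linarith [hle j i hj hi (by omega) hij']

namespace SymmetricSolution

def chooseSum (b d : ℕ) : ℤ := (b + 1).choose d + b.choose d

theorem chooseSum_zero_right (b : ℕ) : chooseSum b 0 = 2 := by
  simp [chooseSum]

theorem chooseSum_succ_succ (b d : ℕ) :
    chooseSum (b + 1) (d + 1) = chooseSum b d + chooseSum b (d + 1) := by
  simp only [chooseSum, Nat.choose_succ_succ (b + 1) d, Nat.choose_succ_succ b d]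
  push_cast
  ring

theorem chooseSum_eq_zero_of_lt {b d : ℕ} (h : b + 1 < d) : chooseSum b d = 0 := by
  simp [chooseSum, Nat.choose_eq_zero_of_lt h, Nat.choose_eq_zero_of_lt (by omega : b < d)]

def symmSol (h i j : ℕ) : ℤ :=
  if 2 * h ≤ i + j then (-1) ^ j * 2
  else (-1) ^ min i j * chooseSum (h - 1 - min i j) (2 * h - (i + j))

variable {h i j : ℕ}

theorem neg_one_pow_eq_of_add_eq (hij : i + j = 2 * h) : ((-1 : ℤ) ^ i) = (-1) ^ j :=
  neg_one_pow_congr (Nat.even_add.mp (hij ▸ even_two_mul h))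

theorem symmSol_of_add_eq (hij : i + j = 2 * h) : symmSol h i j = (-1) ^ j * 2 := by
  simp [symmSol, hij]

theorem symmSol_comm (hij : i + j ≤ 2 * h) : symmSol h i j = symmSol h j i := by
  rcases hij.eq_or_lt with htop | hlt
  · rw [symmSol_of_add_eq htop, symmSol_of_add_eq (by omega), neg_one_pow_eq_of_add_eq htop]
  · simp only [symmSol, if_neg (by omega : ¬2 * h ≤ j + i), min_comm i j,
      add_comm i j]

theorem symmSol_eq (hij : i + j ≤ 2 * h) :
    symmSol h i j = (-1) ^ min i j * chooseSum (h - 1 - min i j) (2 * h - (i + j)) := by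
  rcases hij.eq_or_lt with htop | hlt
  · have hparity : ((-1 : ℤ) ^ j) = (-1) ^ min i j := by
      rcases min_choice i j with hm | hm <;> rw [hm]
      exact (neg_one_pow_eq_of_add_eq htop).symm
    rw [symmSol_of_add_eq htop, htop, Nat.sub_self, chooseSum_zero_right, hparity]
  · rw [symmSol, if_neg (by omega)]

theorem symmSol_recurrence_of_lt (hji : j < i) (hj : 1 ≤ j) (hij : i + j ≤ 2 * h) :
    symmSol h i j + symmSol h (i - 1) j + symmSol h i (j - 1) = 0 := by
  obtain ⟨k, rfl⟩ : ∃ k, j = k + 1 := ⟨j - 1, by omega⟩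
  obtain ⟨b, hb⟩ : ∃ b, h - 1 - k = b + 1 := ⟨h - 2 - k, by omega⟩
  obtain ⟨d, hd⟩ : ∃ d, 2 * h - (i + (k + 1)) = d := ⟨_, rfl⟩
  rw [symmSol_eq hij, symmSol_eq (by omega),
    symmSol_eq (by omega), min_eq_right (by omega),
    min_eq_right (by omega), min_eq_right (by omega), Nat.add_sub_cancel,
    show h - 1 - (k + 1) = b by omega, hb, hd, show 2 * h - (i - 1 + (k + 1)) = d + 1 by omega,
    show 2 * h - (i + k) = d + 1 by omega, chooseSum_succ_succ, pow_succ]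
  ring

theorem symmSol_recurrence_diag (hi : 1 ≤ i) (hih : i ≤ h) :
    symmSol h i i + symmSol h (i - 1) i + symmSol h i (i - 1) = 0 := by
  obtain ⟨k, rfl⟩ : ∃ k, i = k + 1 := ⟨i - 1, by omega⟩
  have hoff : symmSol h k (k + 1) = (-1) ^ k * chooseSum (h - 1 - k) (2 * (h - 1 - k) + 1) := by
    rw [symmSol_eq (by omega), min_eq_left (by omega),
      show 2 * h - (k + (k + 1)) = 2 * (h - 1 - k) + 1 by omega]
  rw [Nat.add_sub_cancel, symmSol_comm (by omega : k + 1 + k ≤ 2 * h), hoff]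
  rcases hih.eq_or_lt with rfl | hlt
  · rw [symmSol_of_add_eq (two_mul _).symm, pow_succ, Nat.add_sub_cancel, Nat.sub_self,
      show chooseSum 0 1 = 1 by simp [chooseSum]]
    ring
  · rw [symmSol_eq (by omega), min_self,
      chooseSum_eq_zero_of_lt (by omega), chooseSum_eq_zero_of_lt (by omega)]
    ring

end SymmetricSolution

theorem stmt10_general (n : ℕ) (heven : Even n) :
    ∃ c : ℕ → ℕ → ℤ,
      (∀ i j : ℕ, i + j ≤ n - 1 → c i j = c j i) ∧
      (∀ i j : ℕ, i + j = n → c i j = (-1) ^ j * 2) ∧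
      (∀ i j : ℕ, 1 ≤ i → 1 ≤ j → i + j ≤ n →
        c i j + c (i - 1) j + c i (j - 1) = 0) := by
  obtain ⟨h, rfl⟩ := even_iff_two_dvd.mp heven
  refine ⟨SymmetricSolution.symmSol h, fun i j hij => SymmetricSolution.symmSol_comm (by omega),
    fun i j => SymmetricSolution.symmSol_of_add_eq, ?_⟩
  refine recurrence_of_symm_of_le (fun i j => SymmetricSolution.symmSol_comm) ?_
  intro i j hi hj hij hji
  rcases hji.lt_or_eq with hlt | rfl
  · exact SymmetricSolution.symmSol_recurrence_of_lt hlt hj hij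
  · exact SymmetricSolution.symmSol_recurrence_diag hi (by omega)

/-- for every even `n ≥ 2` the order-`n` system has a symmetric
solution with `c₀ = 2`: there are integers `c i j`, symmetric in `i, j` in
degrees `≤ n - 1`, taking the value `(-1)^j · 2` whenever `i + j = n`, and
satisfying `c i j + c (i-1) j + c i (j-1) = 0` for all `i, j ≥ 1` with
`i + j ≤ n`. -/
theorem stmt10 (n : ℕ) (hn : 2 ≤ n) (heven : Even n) :
    ∃ c : ℕ → ℕ → ℤ,
      (∀ i j : ℕ, i + j ≤ n - 1 → c i j = c j i) ∧
      (∀ i j : ℕ, i + j = n → c i j = (-1) ^ j * 2) ∧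
      (∀ i j : ℕ, 1 ≤ i → 1 ≤ j → i + j ≤ n →
        c i j + c (i - 1) j + c i (j - 1) = 0) :=
  stmt10_general n heven
end

section
/- For every odd integer n ≥ 1 there exists a skew-symmetric solution of the order-n system with c_0 = 1; that is, there exist integers c_{i,j} for i,j ≥ 0 with i + j ≤ n − 1 satisfying c_{i,j} = −c_{j,i} for all i, j (in particular c_{i,i} = 0), such that, setting c_0 = 1 and c_{i,j} = (−1)^j·c_0 whenever i + j = n, one has c_{i,j} + c_{i−1,j} + c_{i,j−1} = 0 for all i, j ≥ 1 with i + j ≤ n. -/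
/-!
Substituting `c i j = (-1)^j d i j`, the equations become `d i (j - 1) = d i j + d (i - 1) j`
and skew-symmetry becomes `d j i = (-1)^(i + j + 1) d i j`. So each row `i + j = m - 1` of `d`
is a partial sum of the row `i + j = m` above it, up to one additive constant per row. Starting
from the all-ones top row, which is symmetric because `n` is odd, reflecting the partial sums
shows that the symmetry type alternates from row to row; the constant is chosen so that the
partial sums vanish at the centre, which is what an antisymmetric row requires.
-/

open Finset

def centeredPartialSum (f : ℕ → ℤ) (L i : ℕ) : ℤ :=
  ∑ k ∈ Ioc 0 i, f k - ∑ k ∈ Ioc 0 (L / 2), f k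

def IsSkewRow (f : ℕ → ℤ) (m : ℕ) : Prop :=
  ∀ i ≤ m, f (m - i) = (-1) ^ (m + 1) * f i

lemma centeredPartialSum_succ_sub (f : ℕ → ℤ) (L i : ℕ) :
    centeredPartialSum f L (i + 1) - centeredPartialSum f L i = f (i + 1) := by
  simp only [centeredPartialSum, sum_Ioc_succ_top (Nat.zero_le i)]
  ring

lemma sum_Ioc_reflect {M : Type*} [AddCommMonoid M] (f : ℕ → M) {i L : ℕ} (hi : i ≤ L) :
    ∑ k ∈ Ioc 0 (L - i), f (L + 1 - k) = ∑ k ∈ Ioc i L, f k := by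
  apply sum_nbij' (fun k ↦ L + 1 - k) (fun k ↦ L + 1 - k) <;> intro k hk <;>
    simp only [mem_Ioc] at hk ⊢ <;> omega

lemma IsSkewRow.sum_Ioc_add {f : ℕ → ℤ} {L : ℕ} (hf : IsSkewRow f (L + 1)) {i : ℕ}
    (hi : i ≤ L) :
    ∑ k ∈ Ioc 0 (L - i), f k + (-1) ^ L * ∑ k ∈ Ioc 0 i, f k =
      (-1) ^ L * ∑ k ∈ Ioc 0 L, f k := by
  have hreflect : ∑ k ∈ Ioc i L, f k = (-1) ^ L * ∑ k ∈ Ioc 0 (L - i), f k := by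
    rw [← sum_Ioc_reflect f hi, mul_sum]
    refine sum_congr rfl fun k hk ↦ ?_
    rw [hf k (by simp only [mem_Ioc] at hk; omega), pow_succ, pow_succ]
    ring
  have hsq : (-1 : ℤ) ^ L * (-1) ^ L = 1 := by
    rw [← mul_pow]; norm_num
  rw [← sum_Ioc_consecutive f (Nat.zero_le i) hi, hreflect]
  linear_combination (-∑ k ∈ Ioc 0 (L - i), f k) * hsq

lemma IsSkewRow.centeredPartialSum {f : ℕ → ℤ} {L : ℕ} (hf : IsSkewRow f (L + 1)) :
    IsSkewRow (centeredPartialSum f L) L := by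
  intro i hi
  have hsum := hf.sum_Ioc_add hi
  unfold _root_.centeredPartialSum
  rcases Nat.even_or_odd L with hL | hL
  · have hcentre := hf.sum_Ioc_add (Nat.div_le_self L 2)
    rw [show L - L / 2 = L / 2 by obtain ⟨h, rfl⟩ := hL; omega] at hcentre
    rw [hL.neg_one_pow] at hsum hcentre
    rw [hL.add_one.neg_one_pow]
    linear_combination hsum - hcentre
  · have htotal := hf.sum_Ioc_add (Nat.zero_le L)
    rw [hL.neg_one_pow] at hsum htotal
    rw [hL.add_one.neg_one_pow]
    simp only [Nat.sub_zero, Ioc_self, sum_empty] at htotal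
    have hzero : ∑ k ∈ Ioc 0 L, f k = 0 := by linarith
    linear_combination hsum - hzero

/-- `solutionRow n t i` is `d i (n - t - i)`, the entry of the row `i + j = n - t`. -/
def solutionRow (n : ℕ) : ℕ → ℕ → ℤ
  | 0 => fun _ ↦ 1
  | t + 1 => centeredPartialSum (solutionRow n t) (n - t - 1)

lemma solutionRow_succ_succ_sub (n t i : ℕ) :
    solutionRow n (t + 1) (i + 1) - solutionRow n (t + 1) i = solutionRow n t (i + 1) :=
  centeredPartialSum_succ_sub _ _ _

lemma isSkewRow_solutionRow {n : ℕ} (hodd : Odd n) {t : ℕ} (ht : t ≤ n) :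
    IsSkewRow (solutionRow n t) (n - t) := by
  induction t with
  | zero =>
    intro i _
    simp only [solutionRow, Nat.sub_zero, hodd.add_one.neg_one_pow, mul_one]
  | succ t ih =>
    have hf := ih (by omega)
    rw [show n - t = n - t - 1 + 1 by omega] at hf
    rw [show n - (t + 1) = n - t - 1 by omega]
    exact hf.centeredPartialSum

theorem stmt11_general (n : ℕ) (hodd : Odd n) :
    ∃ c : ℕ → ℕ → ℤ,
      (∀ i j : ℕ, i + j ≤ n - 1 → c i j = -c j i) ∧
      (∀ i j : ℕ, i + j = n → c i j = (-1) ^ j * 1) ∧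
      (∀ i j : ℕ, 1 ≤ i → 1 ≤ j → i + j ≤ n →
        c i j + c (i - 1) j + c i (j - 1) = 0) := by
  refine ⟨fun i j ↦ (-1) ^ j * solutionRow n (n - (i + j)) i, ?_, ?_, ?_⟩
  · intro i j hij
    have hskew := isSkewRow_solutionRow hodd (Nat.sub_le n (i + j)) i (by omega)
    rw [show n - (n - (i + j)) = i + j by omega, Nat.add_sub_cancel_left] at hskew
    have hsq : (-1 : ℤ) ^ i * (-1) ^ i = 1 := by
      rw [← mul_pow]; norm_num
    simp only [add_comm j i, hskew, pow_add, pow_succ]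
    linear_combination (-(-1) ^ j * solutionRow n (n - (i + j)) i) * hsq
  · intro i j hij
    simp only [hij, Nat.sub_self, solutionRow]
  · intro i j hi hj hij
    obtain ⟨i, rfl⟩ := Nat.exists_eq_add_of_le' hi
    obtain ⟨j, rfl⟩ := Nat.exists_eq_add_of_le' hj
    have hrow := solutionRow_succ_succ_sub n (n - (i + 1 + (j + 1))) i
    rw [show n - (i + 1 + (j + 1)) + 1 = n - (i + (j + 1)) by omega] at hrow
    simp only [Nat.add_sub_cancel, show n - (i + 1 + j) = n - (i + (j + 1)) by omega, pow_succ]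
    linear_combination (-1) ^ j * hrow

/-- for every odd `n ≥ 1` the order-`n` system has a
skew-symmetric solution with `c₀ = 1`: there are integers `c i j`,
skew-symmetric in `i, j` in degrees `≤ n - 1` (in particular `c i i = 0`),
taking the value `(-1)^j · 1` whenever `i + j = n`, and satisfying
`c i j + c (i-1) j + c i (j-1) = 0` for all `i, j ≥ 1` with `i + j ≤ n`. -/
theorem stmt11 (n : ℕ) (hn : 1 ≤ n) (hodd : Odd n) :
    ∃ c : ℕ → ℕ → ℤ,
      (∀ i j : ℕ, i + j ≤ n - 1 → c i j = -c j i) ∧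
      (∀ i j : ℕ, i + j = n → c i j = (-1) ^ j * 1) ∧
      (∀ i j : ℕ, 1 ≤ i → 1 ≤ j → i + j ≤ n →
        c i j + c (i - 1) j + c i (j - 1) = 0) :=
  stmt11_general n hodd
end

section
/- Let n ≥ 2 be an even integer. Define c_0 = 2 and, for 0 ≤ a ≤ n − 1, define c_{a, n−1−a} = (−1)^a·(n − 1 − 2a). Then this family is symmetric, i.e. c_{a, n−1−a} = c_{n−1−a, a} for all 0 ≤ a ≤ n − 1, and it solves all the TOP equations: (−1)^i·c_0 + c_{n−1−i, i} + c_{n−i, i−1} = 0 for every i with 1 ≤ i ≤ n − 1. -/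
theorem neg_one_pow_sub_of_odd {R : Type*} [Ring R] {N k : ℕ} (hN : Odd N) (hk : k ≤ N) :
    (-1 : R) ^ (N - k) = -(-1) ^ k := by
  rw [← mul_neg_one ((-1 : R) ^ k), ← pow_succ]
  exact neg_one_pow_congr <| by
    simp [Nat.even_sub hk, Nat.even_add_one, Nat.not_even_iff_odd.mpr hN]

/-- The coefficient `c_{a, n-1-a}`. -/
def topCoeff (n a : ℕ) : ℤ := (-1 : ℤ) ^ a * ((n : ℤ) - 1 - 2 * (a : ℤ))

theorem topCoeff_sub_one_sub {n a : ℕ} (hn : Even n) (ha : a < n) :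
    topCoeff n (n - 1 - a) = topCoeff n a := by
  have hodd : Odd (n - 1) := Nat.Even.sub_odd (by omega) hn odd_one
  rw [topCoeff, topCoeff, neg_one_pow_sub_of_odd hodd (by omega), Nat.cast_sub (by omega),
    Nat.cast_sub (by omega)]
  ring

/- By symmetry the two coefficients are those of `i` and `i - 1`: opposite signs, and linear
factors differing by `2`. -/
theorem topCoeff_top_eq {n i : ℕ} (hn : Even n) (hi : 1 ≤ i) (hin : i < n) :
    (-1 : ℤ) ^ i * 2 + topCoeff n (n - 1 - i) + topCoeff n (n - i) = 0 := by
  obtain ⟨j, rfl⟩ := Nat.exists_eq_add_of_le' hi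
  rw [show n - (j + 1) = n - 1 - j by omega, topCoeff_sub_one_sub hn hin,
    topCoeff_sub_one_sub hn (by omega), topCoeff, topCoeff]
  push_cast
  ring

/-- for even `n ≥ 2`, the family `c₀ = 2`,
`c (a) (n-1-a) = (-1)^a · (n - 1 - 2a)` is symmetric and solves all the TOP
equations `(-1)^i · c₀ + c (n-1-i) (i) + c (n-i) (i-1) = 0` for
`1 ≤ i ≤ n - 1`.  Here `f a` denotes the value `c (a) (n-1-a)`. -/
theorem stmt12 (n : ℕ) (hn : 2 ≤ n) (heven : Even n) :
    let f : ℕ → ℤ := fun a => (-1 : ℤ) ^ a * ((n : ℤ) - 1 - 2 * (a : ℤ))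
    (∀ a : ℕ, a ≤ n - 1 → f a = f (n - 1 - a)) ∧
    (∀ i : ℕ, 1 ≤ i → i ≤ n - 1 →
      (-1 : ℤ) ^ i * 2 + f (n - 1 - i) + f (n - i) = 0) :=
  ⟨fun _ ha => (topCoeff_sub_one_sub heven (by omega)).symm,
    fun _ hi hin => topCoeff_top_eq heven hi (by omega)⟩
end

section
/- Let n ≥ 1 be an odd integer and set m = (n − 1)/2. Define c_0 = 1 and, for 0 ≤ a ≤ n − 1, define c_{a, n−1−a} = (−1)^{n−1−a}·(a − m). Then this family is skew-symmetric, i.e. c_{a, n−1−a} = −c_{n−1−a, a} for all 0 ≤ a ≤ n − 1, with c_{m,m} = 0, and it solves all the TOP equations: (−1)^i·c_0 + c_{n−1−i, i} + c_{n−i, i−1} = 0 for every i with 1 ≤ i ≤ n − 1. -/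
/-!
Writing `n = 2k + 1`, the family is `a ↦ (-1)^(2k-a) (a - k)`. Since `2k - a` and `a` have the same
parity, reflecting `a ↦ 2k - a` keeps the sign and negates `a - k`, which gives skew-symmetry. In the
`i`-th TOP equation the two entries carry opposite signs `(-1)^i` and `(-1)^(i-1)`, and their factors
`k - i` and `k - i + 1` differ by one, which cancels the `(-1)^i c₀` term.
-/

/-- The coefficient `c_{a, 2k-a}` of the solution for `n = 2k + 1`. -/
def topSolution (k a : ℕ) : ℤ := (-1) ^ (2 * k - a) * ((a : ℤ) - k)

lemma topSolution_reflect {k a : ℕ} (ha : a ≤ 2 * k) :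
    topSolution k (2 * k - a) = (-1) ^ a * ((k : ℤ) - a) := by
  rw [topSolution, Nat.sub_sub_self ha, Nat.cast_sub ha]
  push_cast
  ring

lemma topSolution_skew {k a : ℕ} (ha : a ≤ 2 * k) :
    topSolution k a = -topSolution k (2 * k - a) := by
  have hsign : (-1 : ℤ) ^ (2 * k - a) = (-1) ^ a :=
    neg_one_pow_congr (by simp [Nat.even_sub ha, parity_simps])
  rw [topSolution_reflect ha, topSolution, hsign]
  ring

lemma topSolution_self (k : ℕ) : topSolution k k = 0 := by
  simp [topSolution]

lemma topSolution_top {k i : ℕ} (hi : i + 1 ≤ 2 * k) :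
    (-1) ^ (i + 1) + topSolution k (2 * k - (i + 1)) + topSolution k (2 * k + 1 - (i + 1)) = 0 := by
  rw [Nat.add_sub_add_right, topSolution_reflect hi, topSolution_reflect (by omega)]
  push_cast
  ring

theorem stmt13_general (n : ℕ) (hodd : Odd n) :
    let m : ℕ := (n - 1) / 2
    let f : ℕ → ℤ := fun a => (-1 : ℤ) ^ (n - 1 - a) * ((a : ℤ) - (m : ℤ))
    (∀ a : ℕ, a ≤ n - 1 → f a = -f (n - 1 - a)) ∧
    f m = 0 ∧
    (∀ i : ℕ, 1 ≤ i → i ≤ n - 1 →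
      (-1 : ℤ) ^ i * 1 + f (n - 1 - i) + f (n - i) = 0) := by
  intro m f
  obtain ⟨k, rfl⟩ := hodd
  have hn : 2 * k + 1 - 1 = 2 * k := rfl
  have hm : m = k := Nat.mul_div_cancel_left k two_pos
  have hf : f = topSolution k := by
    funext a
    simp only [f, hm, hn, topSolution]
  simp only [hf, hm, hn, mul_one]
  refine ⟨fun a ha => topSolution_skew ha, topSolution_self k, fun i hi₁ hi₂ => ?_⟩
  obtain ⟨j, rfl⟩ := Nat.exists_eq_add_of_le' hi₁
  exact topSolution_top hi₂

/-- for odd `n ≥ 1` with `m = (n-1)/2`, the family `c₀ = 1`,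
`c (a) (n-1-a) = (-1)^(n-1-a) · (a - m)` is skew-symmetric with `c m m = 0` and
solves all the TOP equations `(-1)^i · c₀ + c (n-1-i) (i) + c (n-i) (i-1) = 0`
for `1 ≤ i ≤ n - 1`.  Here `f a` denotes the value `c (a) (n-1-a)`. -/
theorem stmt13 (n : ℕ) (hn : 1 ≤ n) (hodd : Odd n) :
    let m : ℕ := (n - 1) / 2
    let f : ℕ → ℤ := fun a => (-1 : ℤ) ^ (n - 1 - a) * ((a : ℤ) - (m : ℤ))
    (∀ a : ℕ, a ≤ n - 1 → f a = -f (n - 1 - a)) ∧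
    f m = 0 ∧
    (∀ i : ℕ, 1 ≤ i → i ≤ n - 1 →
      (-1 : ℤ) ^ i * 1 + f (n - 1 - i) + f (n - i) = 0) :=
  stmt13_general n hodd
end

section
/- Let n1, n2 ≥ 1 be integers. Suppose (c_0, c_{i,j}) is a solution of the order-n1 system and (d_0, d_{k,l}) is a solution of the order-n2 system, each extended to top degree by c_{i,j} = (−1)^j·c_0 for i + j = n1 and d_{k,l} = (−1)^l·d_0 for k + l = n2. Define e_{i,j,k,l} = c_{i,j}·d_{k,l} for all i + j ≤ n1 and k + l ≤ n2. Then: (1) e_{i,j,k,l} = (−1)^{j+l}·c_0·d_0 whenever i + j = n1 and k + l = n2; (2) e_{i,j,k,l} + e_{i−1,j,k,l} + e_{i,j−1,k,l} = 0 for all i, j ≥ 1 with i + j ≤ n1 and all k, l ≥ 0 with k + l ≤ n2; and (3) e_{i,j,k,l} + e_{i,j,k−1,l} + e_{i,j,k,l−1} = 0 for all k, l ≥ 1 with k + l ≤ n2 and all i, j ≥ 0 with i + j ≤ n1. (Thus the product of a combinatorial parity formula generated by R^{n1} and one generated by L^{n2} is a combinatorial parity formula generated by R^{n1}L^{n2}.)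 -/
theorem stmt14_general (n1 n2 : ℕ)
    (c0 d0 : ℤ) (c d : ℕ → ℕ → ℤ)
    (hctop : ∀ i j : ℕ, i + j = n1 → c i j = (-1) ^ j * c0)
    (hcbot : ∀ i j : ℕ, 1 ≤ i → 1 ≤ j → i + j ≤ n1 →
      c i j + c (i - 1) j + c i (j - 1) = 0)
    (hdtop : ∀ k l : ℕ, k + l = n2 → d k l = (-1) ^ l * d0)
    (hdbot : ∀ k l : ℕ, 1 ≤ k → 1 ≤ l → k + l ≤ n2 →
      d k l + d (k - 1) l + d k (l - 1) = 0) :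
    (∀ i j k l : ℕ, i + j = n1 → k + l = n2 →
      c i j * d k l = (-1) ^ (j + l) * (c0 * d0)) ∧
    (∀ i j k l : ℕ, 1 ≤ i → 1 ≤ j → i + j ≤ n1 → k + l ≤ n2 →
      c i j * d k l + c (i - 1) j * d k l + c i (j - 1) * d k l = 0) ∧
    (∀ i j k l : ℕ, 1 ≤ k → 1 ≤ l → k + l ≤ n2 → i + j ≤ n1 →
      c i j * d k l + c i j * d (k - 1) l + c i j * d k (l - 1) = 0) := by
  refine ⟨fun i j k l hij hkl => ?_, fun i j k l hi hj hij _ => ?_,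
    fun i j k l hk hl hkl _ => ?_⟩
  · rw [hctop i j hij, hdtop k l hkl, pow_add]
    ring
  · rw [← add_mul, ← add_mul, hcbot i j hi hj hij, zero_mul]
  · rw [← mul_add, ← mul_add, hdbot k l hk hl hkl, mul_zero]

/-- the product of a solution of the order-`n₁` system and a
solution of the order-`n₂` system, `e i j k l = c i j · d k l`, satisfies the
top-degree normalization and both families of second-Reidemeister-move
equations.  (The product of a combinatorial parity formula generated by
`R^{n₁}` and one generated by `L^{n₂}` is a combinatorial parity formula
generated by `R^{n₁} L^{n₂}`.) -/
theorem stmt14 (n1 n2 : ℕ) (h1 : 1 ≤ n1) (h2 : 1 ≤ n2)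
    (c0 d0 : ℤ) (c d : ℕ → ℕ → ℤ)
    (hctop : ∀ i j : ℕ, i + j = n1 → c i j = (-1) ^ j * c0)
    (hcbot : ∀ i j : ℕ, 1 ≤ i → 1 ≤ j → i + j ≤ n1 →
      c i j + c (i - 1) j + c i (j - 1) = 0)
    (hdtop : ∀ k l : ℕ, k + l = n2 → d k l = (-1) ^ l * d0)
    (hdbot : ∀ k l : ℕ, 1 ≤ k → 1 ≤ l → k + l ≤ n2 →
      d k l + d (k - 1) l + d k (l - 1) = 0) :
    (∀ i j k l : ℕ, i + j = n1 → k + l = n2 →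
      c i j * d k l = (-1) ^ (j + l) * (c0 * d0)) ∧
    (∀ i j k l : ℕ, 1 ≤ i → 1 ≤ j → i + j ≤ n1 → k + l ≤ n2 →
      c i j * d k l + c (i - 1) j * d k l + c i (j - 1) * d k l = 0) ∧
    (∀ i j k l : ℕ, 1 ≤ k → 1 ≤ l → k + l ≤ n2 → i + j ≤ n1 →
      c i j * d k l + c i j * d (k - 1) l + c i j * d k (l - 1) = 0) :=
  stmt14_general n1 n2 c0 d0 c d hctop hcbot hdtop hdbot
end

section
/- For every integer k ≥ 1, the (3k+1) × (3k+1) integer block matrix M_k with block rows [S_k, Z_k, I_k], [L_k, T_k, Z_k], [Z_{k+1}, E_k, J_k] has rank 3k+1; equivalently, M_k is invertible as a matrix over ℚ. -/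
/-- The `(3k+1) × (3k+1)` block matrix `M_k` with block rows
`[S_k, Z_k, I_k]`, `[L_k, T_k, Z_k]`, `[Z_{k+1}, E_k, J_k]` (indices of the
blocks are 0-based here; the defining conditions are translated from the
1-based description).  Block rows are indexed by `Fin k ⊕ (Fin k ⊕ Fin (k+1))`
and block columns by `Fin (k+1) ⊕ (Fin k ⊕ Fin k)`. -/
def evenBlockMatrix (k : ℕ) :
    Matrix (Fin k ⊕ (Fin k ⊕ Fin (k + 1))) (Fin (k + 1) ⊕ (Fin k ⊕ Fin k)) ℤ :=
  Matrix.of fun r c =>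
    match r, c with
    -- S_k : (S_k)_{p,q} = 1 iff q = p or q = p + 1
    | Sum.inl p, Sum.inl q =>
        if (q : ℕ) = (p : ℕ) ∨ (q : ℕ) = (p : ℕ) + 1 then 1 else 0
    -- Z_k
    | Sum.inl _, Sum.inr (Sum.inl _) => 0
    -- I_k
    | Sum.inl p, Sum.inr (Sum.inr q) => if (p : ℕ) = (q : ℕ) then 1 else 0
    -- L_k : (L_k)_{p,p+1} = 1
    | Sum.inr (Sum.inl p), Sum.inl q => if (q : ℕ) = (p : ℕ) + 1 then 1 else 0
    -- T_k : diagonal 1 except last diagonal entry 2; superdiagonal 1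
    | Sum.inr (Sum.inl p), Sum.inr (Sum.inl q) =>
        if (p : ℕ) = (q : ℕ) then (if (p : ℕ) = k - 1 then 2 else 1)
        else if (q : ℕ) = (p : ℕ) + 1 then 1 else 0
    -- Z_k
    | Sum.inr (Sum.inl _), Sum.inr (Sum.inr _) => 0
    -- Z_{k+1}
    | Sum.inr (Sum.inr _), Sum.inl _ => 0
    -- E_k : only nonzero entry is a 1 in the (1-based) position (k+1, k)
    | Sum.inr (Sum.inr p), Sum.inr (Sum.inl q) =>
        if (p : ℕ) = k ∧ (q : ℕ) = k - 1 then 1 else 0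
    -- J_k : (J_k)_{p,p} = 1 for 1 ≤ p ≤ k
    | Sum.inr (Sum.inr p), Sum.inr (Sum.inr q) =>
        if (p : ℕ) = (q : ℕ) then 1 else 0

/-!
Write a vector in the kernel as `(a, b, c)` with blocks of lengths `k + 1`, `k`, `k`. The last
block row gives `c = 0` and `b_{k-1} = 0`; the last row of the middle block then reads
`a_k + 2 b_{k-1} = 0`, so `a_k = 0`. The first block row now says `a_p + a_{p+1} = 0`, which
propagates `a = 0` downwards, and the remaining middle rows say `b_p + b_{p+1} = 0`, which does
the same for `b`. No division is needed, so the kernel is trivial over every commutative ring.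
-/

open Matrix Sum

theorem Matrix.rank_eq_card_width_of_mulVec_eq_zero {K m n : Type*} [CommRing K]
    [StrongRankCondition K] [Fintype m] [Fintype n] (A : Matrix m n K)
    (h : ∀ x, A *ᵥ x = 0 → x = 0) : A.rank = Fintype.card n := by
  have hinj : Function.Injective A.mulVecLin := by
    rw [← LinearMap.ker_eq_bot, LinearMap.ker_eq_bot']
    exact h
  rw [Matrix.rank, LinearMap.finrank_range_of_inj hinj, Module.finrank_fintype_fun_eq_card]

variable {R : Type*} [CommRing R]

/-- Padding by zeros turns the index bookkeeping at the ends of the blocks (terms such as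
`b_k`) into ordinary values of a sequence. -/
def extendByZero {n : ℕ} (v : Fin n → R) (m : ℕ) : R := if h : m < n then v ⟨m, h⟩ else 0

lemma extendByZero_of_le {n m : ℕ} (v : Fin n → R) (h : n ≤ m) : extendByZero v m = 0 :=
  dif_neg h.not_gt

lemma extendByZero_val {n : ℕ} (v : Fin n → R) (i : Fin n) : extendByZero v i = v i :=
  dif_pos i.isLt

lemma sum_ite_val_eq_extendByZero {n : ℕ} (v : Fin n → R) (m : ℕ) :
    ∑ q : Fin n, (if (q : ℕ) = m then v q else 0) = extendByZero v m := by
  unfold extendByZero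
  split_ifs with h
  · rw [Finset.sum_eq_single_of_mem ⟨m, h⟩ (Finset.mem_univ _)]
    · simp
    · intro q _ hq
      exact if_neg fun hc => hq (Fin.ext hc)
  · exact Finset.sum_eq_zero fun q _ => if_neg (by omega)

lemma eq_zero_of_extendByZero_eq_zero {n : ℕ} {v : Fin n → R}
    (h : ∀ m < n, extendByZero v m = 0) : v = 0 := by
  funext i
  exact (extendByZero_val v i).symm.trans (h i i.isLt)

lemma eq_zero_of_add_succ_eq_zero {f : ℕ → R} {n : ℕ} (hn : f n = 0)
    (h : ∀ p < n, f p + f (p + 1) = 0) {m : ℕ} (hm : m ≤ n) : f m = 0 := by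
  induction hm using Nat.decreasingInduction with
  | self => exact hn
  | of_succ p hp ih => linear_combination h p hp - ih

section

variable {k : ℕ} (x : Fin (k + 1) ⊕ (Fin k ⊕ Fin k) → R)

lemma evenBlockMatrix_mulVec_inl (p : Fin k) :
    ((evenBlockMatrix k).map (Int.cast : ℤ → R) *ᵥ x) (inl p) =
      extendByZero (x ∘ inl) p + extendByZero (x ∘ inl) (p + 1)
        + extendByZero (x ∘ inr ∘ inr) p := by
  simp only [mulVec, dotProduct, Fintype.sum_sum_type, map_apply, evenBlockMatrix, of_apply,
    apply_ite (Int.cast : ℤ → R), Int.cast_one, Int.cast_zero, ite_mul, one_mul, zero_mul]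
  simp only [← sum_ite_val_eq_extendByZero, Function.comp_apply, Finset.sum_const_zero,
    zero_add, ← Finset.sum_add_distrib]
  congr 1 <;> refine Finset.sum_congr rfl fun q _ => ?_ <;> split_ifs <;> first | omega | simp

lemma evenBlockMatrix_mulVec_inr_inl (p : Fin k) :
    ((evenBlockMatrix k).map (Int.cast : ℤ → R) *ᵥ x) (inr (inl p)) =
      extendByZero (x ∘ inl) (p + 1)
        + (if (p : ℕ) = k - 1 then 2 else 1) * extendByZero (x ∘ inr ∘ inl) p
        + extendByZero (x ∘ inr ∘ inl) (p + 1) := by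
  simp only [mulVec, dotProduct, Fintype.sum_sum_type, map_apply, evenBlockMatrix, of_apply,
    apply_ite (Int.cast : ℤ → R), Int.cast_one, Int.cast_zero, Int.cast_ofNat, ite_mul, one_mul,
    zero_mul]
  simp only [← sum_ite_val_eq_extendByZero, Function.comp_apply, Finset.sum_const_zero,
    add_zero, add_assoc]
  congr 1
  by_cases h : (p : ℕ) = k - 1 <;>
    simp only [h, if_true, if_false, Finset.mul_sum, ← Finset.sum_add_distrib] <;>
    refine Finset.sum_congr rfl fun q _ => ?_ <;> split_ifs <;> first | omega | simp

lemma evenBlockMatrix_mulVec_inr_inr (p : Fin (k + 1)) :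
    ((evenBlockMatrix k).map (Int.cast : ℤ → R) *ᵥ x) (inr (inr p)) =
      (if (p : ℕ) = k then extendByZero (x ∘ inr ∘ inl) (k - 1) else 0)
        + extendByZero (x ∘ inr ∘ inr) p := by
  simp only [mulVec, dotProduct, Fintype.sum_sum_type, map_apply, evenBlockMatrix, of_apply,
    apply_ite (Int.cast : ℤ → R), Int.cast_one, Int.cast_zero, ite_mul, one_mul, zero_mul]
  simp only [← sum_ite_val_eq_extendByZero, Function.comp_apply, Finset.sum_const_zero, zero_add]
  congr 1
  · split_ifs with h <;> simp [h]
  · exact Finset.sum_congr rfl fun q _ => by simp only [eq_comm]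

theorem evenBlockMatrix_mulVec_eq_zero (hk : 1 ≤ k)
    (hx : (evenBlockMatrix k).map (Int.cast : ℤ → R) *ᵥ x = 0) : x = 0 := by
  set a := extendByZero (x ∘ inl)
  set b := extendByZero (x ∘ inr ∘ inl)
  set c := extendByZero (x ∘ inr ∘ inr)
  have row₁ (p : Fin k) : a p + a (p + 1) + c p = 0 := by
    rw [← evenBlockMatrix_mulVec_inl, hx, Pi.zero_apply]
  have row₂ (p : Fin k) :
      a (p + 1) + (if (p : ℕ) = k - 1 then 2 else 1) * b p + b (p + 1) = 0 := by
    rw [← evenBlockMatrix_mulVec_inr_inl, hx, Pi.zero_apply]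
  have row₃ (p : Fin (k + 1)) : (if (p : ℕ) = k then b (k - 1) else 0) + c p = 0 := by
    rw [← evenBlockMatrix_mulVec_inr_inr, hx, Pi.zero_apply]
  have hc (m : ℕ) : c m = 0 := by
    rcases lt_or_ge m k with hm | hm
    · simpa [hm.ne] using row₃ ⟨m, by omega⟩
    · exact extendByZero_of_le _ hm
  have hb_last : b (k - 1) = 0 := by simpa [hc] using row₃ (Fin.last k)
  have ha_last : a k = 0 := by
    have hb_top : b k = 0 := extendByZero_of_le _ le_rfl
    simpa [Nat.sub_add_cancel hk, hb_last, hb_top] using row₂ ⟨k - 1, by omega⟩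
  have ha (m : ℕ) (hm : m < k + 1) : a m = 0 :=
    eq_zero_of_add_succ_eq_zero ha_last (fun p hp => by simpa [hc] using row₁ ⟨p, hp⟩) (by omega)
  have hb (m : ℕ) (hm : m < k) : b m = 0 :=
    eq_zero_of_add_succ_eq_zero hb_last
      (fun p hp => by
        simpa [ha (p + 1) (by omega), show p ≠ k - 1 by omega] using row₂ ⟨p, by omega⟩)
      (by omega)
  ext (i | i | i)
  exacts [congrFun (eq_zero_of_extendByZero_eq_zero ha) i,
    congrFun (eq_zero_of_extendByZero_eq_zero hb) i,
    congrFun (eq_zero_of_extendByZero_eq_zero fun m _ => hc m) i]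

end

/-- for every `k ≥ 1`, the block matrix `M_k` has rank `3k + 1`
over `ℚ`; equivalently, it is invertible as a matrix over `ℚ`. -/
theorem stmt15 (k : ℕ) (hk : 1 ≤ k) :
    ((evenBlockMatrix k).map ((↑) : ℤ → ℚ)).rank = 3 * k + 1 := by
  rw [Matrix.rank_eq_card_width_of_mulVec_eq_zero _
    fun x => evenBlockMatrix_mulVec_eq_zero x hk]
  simp only [Fintype.card_sum, Fintype.card_fin]
  ring
end

section
/- For every integer j ≥ 2, the (3j−2) × (3j−2) integer block matrix M_j with block rows [S_{j−1}, Z_{j−1}, I_{j−1}], [L_{j−1}, T_{j−1}, Z_{j−1}], [H_j, Y_j, J_{j−1}] has rank 3j−2; equivalently, M_j is invertible as a matrix over ℚ. -/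
/-!
Write a vector in the kernel of `M_j` as `(x, y, z)` along the column blocks. The last block
row says `z = 0` and `j * x_j = 0`; the first block row then reads `x_p + x_{p+1} = 0`, so
`x = 0` by downward induction from `x_j = 0`. With `x = 0` the second block row reads
`y_p + y_{p+1} = 0` and `y_{j-1} = 0`, so `y = 0` in the same way. Thus `M_j` is injective,
and its rank is its number of columns `j + 2(j - 1) = 3j - 2`.
-/

/-- The `(3j-2) × (3j-2)` block matrix `M_j` with block rows
`[S_{j-1}, Z_{j-1}, I_{j-1}]`, `[L_{j-1}, T_{j-1}, Z_{j-1}]`,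
`[H_j, Y_j, J_{j-1}]` (indices of the blocks are 0-based here; the defining
conditions are translated from the 1-based description).  Block rows are
indexed by `Fin (j-1) ⊕ (Fin (j-1) ⊕ Fin j)` and block columns by
`Fin j ⊕ (Fin (j-1) ⊕ Fin (j-1))`. -/
def oddBlockMatrix (j : ℕ) :
    Matrix (Fin (j - 1) ⊕ (Fin (j - 1) ⊕ Fin j))
      (Fin j ⊕ (Fin (j - 1) ⊕ Fin (j - 1))) ℤ :=
  Matrix.of fun r c =>
    match r, c with
    -- S_{j-1} : (S)_{p,q} = 1 iff q = p or q = p + 1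
    | Sum.inl p, Sum.inl q =>
        if (q : ℕ) = (p : ℕ) ∨ (q : ℕ) = (p : ℕ) + 1 then 1 else 0
    -- Z_{j-1}
    | Sum.inl _, Sum.inr (Sum.inl _) => 0
    -- I_{j-1}
    | Sum.inl p, Sum.inr (Sum.inr q) => if (p : ℕ) = (q : ℕ) then 1 else 0
    -- L_{j-1} : (L)_{p,p+1} = 1
    | Sum.inr (Sum.inl p), Sum.inl q => if (q : ℕ) = (p : ℕ) + 1 then 1 else 0
    -- T_{j-1} : all diagonal entries 1; superdiagonal 1
    | Sum.inr (Sum.inl p), Sum.inr (Sum.inl q) =>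
        if (p : ℕ) = (q : ℕ) then 1
        else if (q : ℕ) = (p : ℕ) + 1 then 1 else 0
    -- Z_{j-1}
    | Sum.inr (Sum.inl _), Sum.inr (Sum.inr _) => 0
    -- H_j : only nonzero entry is the value j in the (1-based) position (j, j)
    | Sum.inr (Sum.inr p), Sum.inl q =>
        if (p : ℕ) = j - 1 ∧ (q : ℕ) = j - 1 then (j : ℤ) else 0
    -- Y_j (zero)
    | Sum.inr (Sum.inr _), Sum.inr (Sum.inl _) => 0
    -- J_{j-1} : (J)_{p,p} = 1 for 1 ≤ p ≤ j - 1
    | Sum.inr (Sum.inr p), Sum.inr (Sum.inr q) =>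
        if (p : ℕ) = (q : ℕ) then 1 else 0

open Matrix

theorem Fin.sum_ite_val_eq {M : Type*} [AddCommMonoid M] {n : ℕ} (k : ℕ) (f : Fin n → M) :
    ∑ q : Fin n, (if (q : ℕ) = k then f q else 0) = if h : k < n then f ⟨k, h⟩ else 0 := by
  split_ifs with h
  · rw [Fintype.sum_eq_single ⟨k, h⟩ fun q hq => if_neg fun hqk => hq (Fin.ext hqk)]
    simp
  · exact Finset.sum_eq_zero fun q _ => if_neg fun (hq : (q : ℕ) = k) => h (hq ▸ q.isLt)

theorem Fin.sum_ite_eq_val {M : Type*} [AddCommMonoid M] {n : ℕ} (k : ℕ) (f : Fin n → M) :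
    ∑ q : Fin n, (if k = (q : ℕ) then f q else 0) = if h : k < n then f ⟨k, h⟩ else 0 := by
  simp_rw [eq_comm (a := k), Fin.sum_ite_val_eq]

theorem ite_else_ite_zero_eq_add {M : Type*} [AddZeroClass M] {P Q : Prop} [Decidable P]
    [Decidable Q] (h : P → ¬Q) (a : M) :
    (if P then a else if Q then a else 0) = (if P then a else 0) + (if Q then a else 0) := by
  split_ifs <;> simp_all

theorem Fin.forall_of_last_of_succ {n : ℕ} {P : Fin n → Prop}
    (last : ∀ h : n - 1 < n, P ⟨n - 1, h⟩)
    (succ : ∀ (i : Fin n) (h : (i : ℕ) + 1 < n), P ⟨i + 1, h⟩ → P i) (i : Fin n) : P i := by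
  suffices ∀ d (i : Fin n), (i : ℕ) + 1 + d = n → P i from this (n - 1 - i) i (by omega)
  intro d
  induction d with
  | zero => exact fun i hi => by simpa [← hi] using last (by omega)
  | succ d ih => exact fun i hi => succ i (by omega) (ih ⟨i + 1, by omega⟩ (by simp only; omega))

theorem Matrix.rank_eq_card_width_of_ker_eq_bot {m n R : Type*} [Fintype n] [CommRing R]
    [StrongRankCondition R] {A : Matrix m n R} (h : LinearMap.ker A.mulVecLin = ⊥) :
    A.rank = Fintype.card n := by
  rw [rank, LinearMap.finrank_range_of_inj (LinearMap.ker_eq_bot.mp h),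
    Module.finrank_fintype_fun_eq_card]

section
variable {j : ℕ} (v : Fin j ⊕ (Fin (j - 1) ⊕ Fin (j - 1)) → ℚ)

theorem oddBlockMatrix_mulVec_inl (p : Fin (j - 1)) :
    ((oddBlockMatrix j).map ((↑) : ℤ → ℚ) *ᵥ v) (Sum.inl p) =
      v (Sum.inl ⟨p, by omega⟩) + v (Sum.inl ⟨p + 1, by omega⟩) + v (Sum.inr (Sum.inr p)) := by
  have hp : (p : ℕ) + 1 < j := by omega
  simp (disch := omega) [hp, Nat.lt_of_succ_lt hp, mulVec, dotProduct, Fintype.sum_sum_type,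
    oddBlockMatrix, ite_or, ite_else_ite_zero_eq_add, add_mul, Finset.sum_add_distrib,
    Fin.sum_ite_val_eq, Fin.sum_ite_eq_val]

theorem oddBlockMatrix_mulVec_inr_inl (p : Fin (j - 1)) :
    ((oddBlockMatrix j).map ((↑) : ℤ → ℚ) *ᵥ v) (Sum.inr (Sum.inl p)) =
      v (Sum.inl ⟨p + 1, by omega⟩) + v (Sum.inr (Sum.inl p)) +
        if h : (p : ℕ) + 1 < j - 1 then v (Sum.inr (Sum.inl ⟨p + 1, h⟩)) else 0 := by
  have hp : (p : ℕ) + 1 < j := by omega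
  simp (disch := omega) [hp, mulVec, dotProduct, Fintype.sum_sum_type, oddBlockMatrix, add_assoc,
    ite_else_ite_zero_eq_add, add_mul, Finset.sum_add_distrib, Fin.sum_ite_val_eq,
    Fin.sum_ite_eq_val]

theorem oddBlockMatrix_mulVec_inr_inr_of_lt (p : Fin j) (hp : (p : ℕ) < j - 1) :
    ((oddBlockMatrix j).map ((↑) : ℤ → ℚ) *ᵥ v) (Sum.inr (Sum.inr p)) =
      v (Sum.inr (Sum.inr ⟨p, hp⟩)) := by
  simp (disch := omega) [hp, mulVec, dotProduct, Fintype.sum_sum_type, oddBlockMatrix,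
    Fin.sum_ite_eq_val]

theorem oddBlockMatrix_mulVec_inr_inr_last (h : j - 1 < j) :
    ((oddBlockMatrix j).map ((↑) : ℤ → ℚ) *ᵥ v) (Sum.inr (Sum.inr ⟨j - 1, h⟩)) =
      j * v (Sum.inl ⟨j - 1, h⟩) := by
  simp [Nat.zero_lt_of_lt h, mulVec, dotProduct, Fintype.sum_sum_type, oddBlockMatrix, ite_and,
    Fin.sum_ite_val_eq, Fin.sum_ite_eq_val]

end

theorem oddBlockMatrix_mulVec_eq_zero {j : ℕ} {v : Fin j ⊕ (Fin (j - 1) ⊕ Fin (j - 1)) → ℚ}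
    (hv : (oddBlockMatrix j).map ((↑) : ℤ → ℚ) *ᵥ v = 0) : v = 0 := by
  have hz : ∀ q : Fin (j - 1), v (Sum.inr (Sum.inr q)) = 0 := fun q => by
    have := congrFun hv (Sum.inr (Sum.inr ⟨q, by omega⟩))
    rwa [oddBlockMatrix_mulVec_inr_inr_of_lt v _ q.isLt] at this
  have hx : ∀ i : Fin j, v (Sum.inl i) = 0 := by
    refine Fin.forall_of_last_of_succ (fun h => ?_) (fun i h hsucc => ?_)
    · have := congrFun hv (Sum.inr (Sum.inr ⟨j - 1, h⟩))
      rw [oddBlockMatrix_mulVec_inr_inr_last] at this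
      simpa [show j ≠ 0 by omega] using this
    · have := congrFun hv (Sum.inl ⟨i, by omega⟩)
      rw [oddBlockMatrix_mulVec_inl] at this
      simpa [hsucc, hz] using this
  have hy : ∀ q : Fin (j - 1), v (Sum.inr (Sum.inl q)) = 0 := by
    refine Fin.forall_of_last_of_succ (fun h => ?_) (fun q h hsucc => ?_)
    · have := congrFun hv (Sum.inr (Sum.inl ⟨j - 1 - 1, h⟩))
      rw [oddBlockMatrix_mulVec_inr_inl, dif_neg (by simp only; omega)] at this
      simpa [hx] using this
    · have := congrFun hv (Sum.inr (Sum.inl q))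
      rw [oddBlockMatrix_mulVec_inr_inl, dif_pos h] at this
      simpa [hx, hsucc] using this
  ext (i | q | q)
  exacts [hx i, hy q, hz q]

theorem stmt16_general (j : ℕ) :
    ((oddBlockMatrix j).map ((↑) : ℤ → ℚ)).rank = 3 * j - 2 := by
  rw [rank_eq_card_width_of_ker_eq_bot
    (ker_mulVecLin_eq_bot_iff.mpr fun _ => oddBlockMatrix_mulVec_eq_zero)]
  simp only [Fintype.card_sum, Fintype.card_fin]
  omega

/-- for every `j ≥ 2`, the block matrix `M_j` has rank `3j - 2`
over `ℚ`; equivalently, it is invertible as a matrix over `ℚ`. -/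
theorem stmt16 (j : ℕ) (hj : 2 ≤ j) :
    ((oddBlockMatrix j).map ((↑) : ℤ → ℚ)).rank = 3 * j - 2 :=
  stmt16_general j
end
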